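/- A decision-conflict logit ρ with representation (u,D) is monotonic (i.e. A ⊇ B implies D(A) ≥ D(B) for all menus A, B) if and only if ρ satisfies axiom A4: for all menus A, B with A ⊋ B, ρ(B,B) · (ρ(A,A) − ρ(B,A))/ρ(B,A) ≥ (ρ(o,B) − ρ(o,A))/ρ(o,A). -/

import Mathlib

open Finset

variable {X : Type*} [Fintype X] [DecidableEq X]

/-- The probability of choosing the outside option (deferring) at menu `A`. -/
noncomputable def defer (ρ : Finset X → X → ℝ) (A : Finset X) : ℝ :=
  1 - ∑ a ∈ A, ρ A a

/-- `ρ` is a random non-forced choice model on `X`. -/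
def IsRNFC (ρ : Finset X → X → ℝ) : Prop :=
  ∀ A : Finset X, A.Nonempty →
    (∀ a ∈ A, 0 ≤ ρ A a ∧ ρ A a ≤ 1) ∧
    (∀ a, a ∉ A → ρ A a = 0) ∧
    (∑ a ∈ A, ρ A a) ≤ 1

/-- `ρ` is a decision-conflict logit with representation `(u, D)`. -/
def IsDCL (ρ : Finset X → X → ℝ) (u : X → ℝ) (D : Finset X → ℝ) : Prop :=
  (∀ a, 0 < u a) ∧
  (∀ A : Finset X, A.Nonempty → 0 ≤ D A ∧ (D A = 0 ↔ A.card = 1)) ∧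
  (∀ A : Finset X, A.Nonempty → ∀ a ∈ A, ρ A a = u a / ((∑ b ∈ A, u b) + D A))

/- Under a decision-conflict logit every probability at a menu `A` shares the denominator
`u(A) + D(A)`, so both sides of Axiom A4 are explicit in `u` and `D`: the left side is
`(u(A) - u(B)) / (u(B) + D(B))` and their difference is `u(A) (D(A) - D(B)) / (D(A) (u(B) + D(B)))`.
For `B ⊊ A` we have `D(A) > 0`, so A4 for the pair `(A, B)` says exactly `D(B) ≤ D(A)`. -/

lemma activeChoice_bound_iff {sA sB dA dB : ℝ} (hsA : 0 < sA) (hsB : 0 < sB)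
    (hdA : 0 < dA) (hdB : 0 ≤ dB) :
    (sB / (sB + dB)) * ((sA / (sA + dA) - sB / (sA + dA)) / (sB / (sA + dA))) ≥
      (dB / (sB + dB) - dA / (sA + dA)) / (dA / (sA + dA)) ↔ dB ≤ dA := by
  have hB : 0 < sB + dB := by positivity
  have hA : 0 < sA + dA := by positivity
  have difference :
      (sB / (sB + dB)) * ((sA / (sA + dA) - sB / (sA + dA)) / (sB / (sA + dA))) -
        (dB / (sB + dB) - dA / (sA + dA)) / (dA / (sA + dA)) =
        sA * (dA - dB) / (dA * (sB + dB)) := by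
    field_simp
    ring
  rw [ge_iff_le, ← sub_nonneg, difference, le_div_iff₀ (by positivity), zero_mul,
    mul_nonneg_iff_of_pos_left hsA, sub_nonneg]

namespace IsDCL

variable {α : Type*} {ρ : Finset α → α → ℝ} {u : α → ℝ} {D : Finset α → ℝ}

lemma utility_sum_pos (h : IsDCL ρ u D) {A : Finset α} (hA : A.Nonempty) :
    0 < ∑ a ∈ A, u a :=
  Finset.sum_pos (fun a _ => h.1 a) hA

lemma sum_apply_of_subset (h : IsDCL ρ u D) {A B : Finset α} (hA : A.Nonempty) (hBA : B ⊆ A) :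
    ∑ b ∈ B, ρ A b = (∑ b ∈ B, u b) / ((∑ a ∈ A, u a) + D A) := by
  rw [Finset.sum_div]
  exact Finset.sum_congr rfl fun b hb => h.2.2 A hA b (hBA hb)

lemma defer_eq (h : IsDCL ρ u D) {A : Finset α} (hA : A.Nonempty) :
    defer ρ A = D A / ((∑ a ∈ A, u a) + D A) := by
  have hpos : 0 < (∑ a ∈ A, u a) + D A :=
    add_pos_of_pos_of_nonneg (h.utility_sum_pos hA) (h.2.1 A hA).1
  rw [defer, h.sum_apply_of_subset hA subset_rfl]
  field_simp
  ring

lemma complexity_pos_of_ssubset (h : IsDCL ρ u D) {A B : Finset α} (hB : B.Nonempty)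
    (hBA : B ⊂ A) : 0 < D A := by
  have hA : A.Nonempty := hB.mono hBA.subset
  have hcard : A.card ≠ 1 := by
    have := Finset.card_lt_card hBA
    have := hB.card_pos
    omega
  exact (h.2.1 A hA).1.lt_of_ne' fun h0 => hcard (((h.2.1 A hA).2).1 h0)

lemma activeChoice_bound_iff_le (h : IsDCL ρ u D) {A B : Finset α} (hB : B.Nonempty)
    (hBA : B ⊂ A) :
    (∑ b ∈ B, ρ B b) * (((∑ a ∈ A, ρ A a) - ∑ b ∈ B, ρ A b) / ∑ b ∈ B, ρ A b)
        ≥ (defer ρ B - defer ρ A) / defer ρ A ↔ D B ≤ D A := by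
  have hA : A.Nonempty := hB.mono hBA.subset
  rw [h.sum_apply_of_subset hA subset_rfl, h.sum_apply_of_subset hB subset_rfl,
    h.sum_apply_of_subset hA hBA.subset, h.defer_eq hA, h.defer_eq hB]
  exact activeChoice_bound_iff (h.utility_sum_pos hA) (h.utility_sum_pos hB)
    (h.complexity_pos_of_ssubset hB hBA) (h.2.1 B hB).1

end IsDCL

theorem stmt3_general (ρ : Finset X → X → ℝ)
    (u : X → ℝ) (D : Finset X → ℝ) (h : IsDCL ρ u D) :
    (∀ A B : Finset X, B.Nonempty → B ⊆ A → D B ≤ D A) ↔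
      (∀ A B : Finset X, B.Nonempty → B ⊂ A →
        (∑ b ∈ B, ρ B b) * (((∑ a ∈ A, ρ A a) - ∑ b ∈ B, ρ A b) / ∑ b ∈ B, ρ A b)
          ≥ (defer ρ B - defer ρ A) / defer ρ A) := by
  constructor
  · intro hmono A B hB hBA
    exact (h.activeChoice_bound_iff_le hB hBA).2 (hmono A B hB hBA.subset)
  · intro hA4 A B hB hBA
    rcases hBA.eq_or_ssubset with rfl | hssub
    · exact le_rfl
    · exact (h.activeChoice_bound_iff_le hB hssub).1 (hA4 A B hB hssub)

/-- Monotonicity of the complexity function `D` is equivalent to Axiom A4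
(Active-Choice Lower Bounds). -/
theorem stmt3 (ρ : Finset X → X → ℝ) (hρ : IsRNFC ρ)
    (u : X → ℝ) (D : Finset X → ℝ) (h : IsDCL ρ u D) :
    (∀ A B : Finset X, B.Nonempty → B ⊆ A → D B ≤ D A) ↔
      (∀ A B : Finset X, B.Nonempty → B ⊂ A →
        (∑ b ∈ B, ρ B b) * (((∑ a ∈ A, ρ A a) - ∑ b ∈ B, ρ A b) / ∑ b ∈ B, ρ A b)
          ≥ (defer ρ B - defer ρ A) / defer ρ A) :=
  stmt3_general ρ u D h
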